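/- Let n ≥ 3 and let V ∈ RH_q(ℝⁿ) with q ∈ (n/2, ∞), V not almost everywhere zero. Then for every x ∈ ℝⁿ the set S_x := { r > 0 : r^{2−n} ∫_{B(x,r)} V(y) dy ≤ 1 } is nonempty and bounded above; consequently the auxiliary function m(x,V), defined by 1/m(x,V) := sup S_x, satisfies 0 < m(x,V) < ∞ for every x ∈ ℝⁿ. -/

import Mathlib

open MeasureTheory Metric ENNReal

noncomputable section

/-- Euclidean space `ℝⁿ`. -/
abbrev E (n : ℕ) := EuclideanSpace ℝ (Fin n)

/-- `V` is a nonnegative function belonging to the reverse Hölder class `RH_q(ℝⁿ)`. -/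
def IsRH (n : ℕ) (q : ℝ) (V : E n → ℝ) : Prop :=
  (∀ x, 0 ≤ V x) ∧ Measurable V ∧
    (∀ (x : E n) (r : ℝ), 0 < r → IntegrableOn V (ball x r) volume) ∧
    (∀ (x : E n) (r : ℝ), 0 < r → IntegrableOn (fun y => V y ^ q) (ball x r) volume) ∧
    ∃ C > 0, ∀ (x : E n) (r : ℝ), 0 < r →
      ((volume (ball x r)).toReal⁻¹ * ∫ y in ball x r, V y ^ q) ^ (1 / q) ≤
        C * ((volume (ball x r)).toReal⁻¹ * ∫ y in ball x r, V y)

/-- The set `S_x = { r > 0 : r^(2-n) ∫_{B(x,r)} V ≤ 1 }`. -/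
def auxSet (n : ℕ) (V : E n → ℝ) (x : E n) : Set ℝ :=
  {r : ℝ | 0 < r ∧ r ^ ((2 : ℝ) - n) * ∫ y in ball x r, V y ≤ 1}

/-- Shen's auxiliary function `m(x, V)`, defined by `1/m(x,V) = sup S_x`. -/
def auxm (n : ℕ) (V : E n → ℝ) (x : E n) : ℝ := (sSup (auxSet n V x))⁻¹

/-!
Hölder's inequality on `B(x, r)`, monotonicity of `∫ V ^ q` in the ball and the reverse Hölder
inequality on `B(x, R)` give `∫_{B(x,r)} V ≤ C (r/R)^(n - n/q) ∫_{B(x,R)} V` for `r ≤ R`.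
Hence `Φ(r) = r^(2-n) ∫_{B(x,r)} V` satisfies `Φ(r) ≤ C (r/R)^α Φ(R)` with `α = 2 - n/q > 0`.
Letting `r → 0` with `R = 1` shows `Φ(r) → 0`, so `S_x ≠ ∅`; and once `Φ(r₀) > 0` (which holds
for large `r₀` because `V` is not a.e. zero), letting `R → ∞` shows `Φ(R) → ∞`, so `S_x` is
bounded.
-/

open Filter Topology Module

section Holder

variable {α : Type*} [MeasurableSpace α] {μ : Measure α} [IsFiniteMeasure μ]

theorem integral_le_integral_rpow_one_div_mul_measureReal_univ {f : α → ℝ} {q : ℝ} (hq : 1 < q)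
    (hf₀ : 0 ≤ᵐ[μ] f) (hf : AEStronglyMeasurable f μ) (hfq : Integrable (fun x => f x ^ q) μ) :
    ∫ x, f x ∂μ ≤ (∫ x, f x ^ q ∂μ) ^ (1 / q) * μ.real Set.univ ^ (1 - 1 / q) := by
  have hpq : q.HolderConjugate q.conjExponent := .conjExponent hq
  have hfLq : MemLp f (ENNReal.ofReal q) μ := by
    rw [← integrable_norm_rpow_iff hf (by simp; linarith) ENNReal.ofReal_ne_top,
      ENNReal.toReal_ofReal (by linarith)]
    refine hfq.congr ?_
    filter_upwards [hf₀] with x hx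
    rw [Real.norm_of_nonneg hx]
  have := integral_mul_le_Lp_mul_Lq_of_nonneg hpq hf₀ (ae_of_all _ fun _ => zero_le_one) hfLq
    (memLp_const (1 : ℝ))
  simpa [← hpq.one_sub_inv] using this

end Holder

section Balls

variable {X : Type*} [PseudoMetricSpace X] [ProperSpace X] [MeasurableSpace X]
  (μ : Measure X) [IsFiniteMeasureOnCompacts μ]

theorem measureReal_ball_pos [μ.IsOpenPosMeasure] (x : X) {r : ℝ} (hr : 0 < r) :
    0 < μ.real (ball x r) :=
  ENNReal.toReal_pos (measure_ball_pos μ x hr).ne' measure_ball_lt_top.ne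

instance isFiniteMeasure_restrict_ball (x : X) (r : ℝ) : IsFiniteMeasure (μ.restrict (ball x r)) :=
  isFiniteMeasure_restrict.2 measure_ball_lt_top.ne

end Balls

theorem measureReal_ball_div_measureReal_ball {F : Type*} [NormedAddCommGroup F]
    [NormedSpace ℝ F] [MeasurableSpace F] [BorelSpace F] [FiniteDimensional ℝ F]
    (μ : Measure F) [μ.IsAddHaarMeasure] (x : F) {r R : ℝ} (hr : 0 < r) (hR : 0 < R) :
    μ.real (ball x r) / μ.real (ball x R) = (r / R) ^ finrank ℝ F := by
  have hunit := (measureReal_ball_pos μ (0 : F) one_pos).ne'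
  simp only [measureReal_def, Measure.addHaar_ball_of_pos μ x hr,
    Measure.addHaar_ball_of_pos μ x hR, ENNReal.toReal_mul,
    ENNReal.toReal_ofReal (pow_nonneg hr.le _), ENNReal.toReal_ofReal (pow_nonneg hR.le _)] at hunit ⊢
  rw [div_pow]
  field_simp

theorem exists_setIntegral_ball_pos {X : Type*} [PseudoMetricSpace X] [MeasurableSpace X]
    [OpensMeasurableSpace X] {μ : Measure X} {V : X → ℝ} (hV₀ : ∀ y, 0 ≤ V y) (x : X)
    (hV : ∀ r, 0 < r → IntegrableOn V (ball x r) μ) (hnz : ¬ V =ᵐ[μ] 0) :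
    ∃ r > 0, 0 < ∫ y in ball x r, V y ∂μ := by
  by_contra! h
  refine hnz ?_
  have hball : ∀ k : ℕ, V =ᵐ[μ.restrict (ball x (k + 1))] 0 := fun k =>
    (integral_eq_zero_iff_of_nonneg hV₀ (hV _ k.cast_add_one_pos)).1 <|
      (h _ k.cast_add_one_pos).antisymm (setIntegral_nonneg measurableSet_ball fun y _ => hV₀ y)
  rw [← Measure.restrict_univ (μ := μ), ← iUnion_ball_nat_succ x]
  exact (ae_restrict_iUnion_iff _ _).2 hball

namespace IsRH

variable {n : ℕ} {q : ℝ} {V : E n → ℝ}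

theorem exists_setIntegral_ball_le (hV : IsRH n q V) (hq : 1 < q) :
    ∃ C > 0, ∀ (x : E n) (r R : ℝ), 0 < r → r ≤ R →
      ∫ y in ball x r, V y ≤ C * (r / R) ^ ((n : ℝ) * (1 - 1 / q)) * ∫ y in ball x R, V y := by
  obtain ⟨hV₀, hVm, -, hVq, C, hC, hRH⟩ := hV
  simp only [← measureReal_def] at hRH
  refine ⟨C, hC, fun x r R hr hrR => ?_⟩
  have hR : 0 < R := hr.trans_le hrR
  set vr := volume.real (ball x r)
  set vR := volume.real (ball x R)
  have hvR : 0 < vR := measureReal_ball_pos volume x hR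
  have hIq : ∀ ρ, 0 ≤ ∫ y in ball x ρ, V y ^ q := fun ρ =>
    setIntegral_nonneg measurableSet_ball fun y _ => Real.rpow_nonneg (hV₀ y) q
  have hholder :
      ∫ y in ball x r, V y ≤ (∫ y in ball x r, V y ^ q) ^ (1 / q) * vr ^ (1 - 1 / q) := by
    have := integral_le_integral_rpow_one_div_mul_measureReal_univ hq
      (ae_of_all _ hV₀) hVm.aestronglyMeasurable (hVq x r hr)
    rwa [measureReal_restrict_apply_univ] at this
  have hmono : ∫ y in ball x r, V y ^ q ≤ ∫ y in ball x R, V y ^ q :=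
    setIntegral_mono_set (hVq x R hR) (ae_of_all _ fun y => Real.rpow_nonneg (hV₀ y) q)
      (ball_subset_ball hrR).eventuallyLE
  have hrev :
      (∫ y in ball x R, V y ^ q) ^ (1 / q) ≤ C * vR ^ (1 / q - 1) * ∫ y in ball x R, V y := by
    have := hRH x R hR
    rw [Real.mul_rpow (inv_nonneg.2 hvR.le) (hIq R), Real.inv_rpow hvR.le] at this
    calc (∫ y in ball x R, V y ^ q) ^ (1 / q)
        = vR ^ (1 / q) * ((vR ^ (1 / q))⁻¹ * (∫ y in ball x R, V y ^ q) ^ (1 / q)) := by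
          field_simp
      _ ≤ vR ^ (1 / q) * (C * (vR⁻¹ * ∫ y in ball x R, V y)) := by gcongr
      _ = C * vR ^ (1 / q - 1) * ∫ y in ball x R, V y := by
          rw [Real.rpow_sub hvR, Real.rpow_one]; ring
  have hratio : vr / vR = (r / R) ^ n := by
    simpa only [finrank_euclideanSpace_fin] using
      measureReal_ball_div_measureReal_ball volume x hr hR
  calc ∫ y in ball x r, V y
      ≤ (C * vR ^ (1 / q - 1) * ∫ y in ball x R, V y) * vr ^ (1 - 1 / q) := by
        refine hholder.trans (mul_le_mul_of_nonneg_right ?_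
          (Real.rpow_nonneg measureReal_nonneg _))
        exact (Real.rpow_le_rpow (hIq r) hmono (by positivity)).trans hrev
    _ = C * (vr / vR) ^ (1 - 1 / q) * ∫ y in ball x R, V y := by
        rw [Real.div_rpow (x := vr) measureReal_nonneg hvR.le, Real.rpow_sub hvR,
          Real.rpow_sub hvR, Real.rpow_one]
        field_simp
    _ = C * (r / R) ^ ((n : ℝ) * (1 - 1 / q)) * ∫ y in ball x R, V y := by
        rw [hratio, Real.rpow_mul (by positivity), Real.rpow_natCast]

theorem exists_scaledMass_le (hV : IsRH n q V) (hq : 1 < q) :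
    ∃ C > 0, ∀ (x : E n) (r R : ℝ), 0 < r → r ≤ R →
      r ^ ((2 : ℝ) - n) * ∫ y in ball x r, V y ≤
        C * (r / R) ^ (2 - (n : ℝ) / q) * (R ^ ((2 : ℝ) - n) * ∫ y in ball x R, V y) := by
  obtain ⟨C, hC, hdecay⟩ := hV.exists_setIntegral_ball_le hq
  refine ⟨C, hC, fun x r R hr hrR => ?_⟩
  have hR : 0 < R := hr.trans_le hrR
  have hr' : r = r / R * R := (div_mul_cancel₀ r hR.ne').symm
  calc r ^ ((2 : ℝ) - n) * ∫ y in ball x r, V y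
      ≤ r ^ ((2 : ℝ) - n) * (C * (r / R) ^ ((n : ℝ) * (1 - 1 / q)) * ∫ y in ball x R, V y) :=
        mul_le_mul_of_nonneg_left (hdecay x r R hr hrR) (by positivity)
    _ = C * ((r / R) ^ ((2 : ℝ) - n) * (r / R) ^ ((n : ℝ) * (1 - 1 / q))) *
          (R ^ ((2 : ℝ) - n) * ∫ y in ball x R, V y) := by
        nth_rw 1 [hr']
        rw [Real.mul_rpow (by positivity) hR.le]; ring
    _ = C * (r / R) ^ (2 - (n : ℝ) / q) * (R ^ ((2 : ℝ) - n) * ∫ y in ball x R, V y) := by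
        rw [← Real.rpow_add (by positivity)]; ring_nf

end IsRH

theorem nonempty_setOf_pos_le_one_of_le_mul_rpow {Φ : ℝ → ℝ} {C α : ℝ} (hα : 0 < α)
    (hΦ : ∀ r R, 0 < r → r ≤ R → Φ r ≤ C * (r / R) ^ α * Φ R) :
    {r | 0 < r ∧ Φ r ≤ 1}.Nonempty := by
  have hlim : Tendsto (fun r : ℝ => C * r ^ α * Φ 1) (𝓝[>] 0) (𝓝 0) := by
    have := (((Real.continuousAt_rpow_const 0 α (Or.inr hα.le)).tendsto.mono_left
      (nhdsWithin_le_nhds (s := Set.Ioi 0))).const_mul C).mul_const (Φ 1)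
    simpa [Real.zero_rpow hα.ne'] using this
  have hunit : ∀ᶠ r in 𝓝[>] (0 : ℝ), r ∈ Set.Ioo 0 1 := Ioo_mem_nhdsGT one_pos
  obtain ⟨r, hr, hsmall⟩ := (hunit.and (hlim.eventually (gt_mem_nhds zero_lt_one))).exists
  refine ⟨r, hr.1, (hΦ r 1 hr.1 hr.2.le).trans ?_⟩
  rw [div_one]
  exact hsmall.le

theorem bddAbove_setOf_pos_le_one_of_le_mul_rpow {Φ : ℝ → ℝ} {C α r₀ : ℝ} (hC : 0 ≤ C)
    (hα : 0 < α) (hr₀ : 0 < r₀) (hΦr₀ : 0 < Φ r₀)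
    (hΦ : ∀ r R, 0 < r → r ≤ R → Φ r ≤ C * (r / R) ^ α * Φ R) :
    BddAbove {r | 0 < r ∧ Φ r ≤ 1} := by
  have hlim : Tendsto (fun R : ℝ => C * (r₀ / R) ^ α) atTop (𝓝 0) := by
    have := ((Real.continuousAt_rpow_const 0 α (Or.inr hα.le)).tendsto.comp
      ((tendsto_const_nhds (x := r₀)).div_atTop tendsto_id)).const_mul C
    simpa [Real.zero_rpow hα.ne'] using this
  obtain ⟨R₀, hR₀⟩ := eventually_atTop.1
    ((hlim.eventually (gt_mem_nhds hΦr₀)).and (eventually_ge_atTop r₀))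
  refine ⟨R₀, fun R ⟨_, hR⟩ => le_of_not_gt fun hRR₀ => ?_⟩
  obtain ⟨hsmall, hr₀R⟩ := hR₀ R hRR₀.le
  have hle : Φ r₀ ≤ C * (r₀ / R) ^ α := calc
    Φ r₀ ≤ C * (r₀ / R) ^ α * Φ R := hΦ r₀ R hr₀ hr₀R
    _ ≤ C * (r₀ / R) ^ α := mul_le_of_le_one_right (by positivity) hR
  exact hle.not_gt hsmall

/-- If `n ≥ 3` and `V ∈ RH_q(ℝⁿ)`, `q ∈ (n/2, ∞)`, `V` not a.e. zero, then for every `x`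
the set `S_x` is nonempty and bounded above; consequently `m(x,V)`, defined by
`1/m(x,V) = sup S_x`, satisfies `0 < m(x,V) < ∞` (in particular `sup S_x > 0`). -/
theorem stmt2 (n : ℕ) (hn : 3 ≤ n) (q : ℝ) (hq : (n : ℝ) / 2 < q)
    (V : E n → ℝ) (hV : IsRH n q V) (hV0 : ¬ V =ᵐ[volume] 0) :
    ∀ x : E n, (auxSet n V x).Nonempty ∧ BddAbove (auxSet n V x) ∧
      0 < sSup (auxSet n V x) ∧ 0 < auxm n V x := by
  intro x
  have hn' : (3 : ℝ) ≤ n := by exact_mod_cast hn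
  have hq1 : 1 < q := by linarith
  have hα : 0 < 2 - (n : ℝ) / q := by rw [sub_pos, div_lt_iff₀ (by linarith)]; linarith
  obtain ⟨C, hC, hΦ⟩ := hV.exists_scaledMass_le hq1
  obtain ⟨hV₀, -, hVint, -⟩ := hV
  obtain ⟨r₀, hr₀, hI⟩ := exists_setIntegral_ball_pos hV₀ x (hVint x) hV0
  have hne : (auxSet n V x).Nonempty := nonempty_setOf_pos_le_one_of_le_mul_rpow hα (hΦ x)
  have hbdd : BddAbove (auxSet n V x) :=
    bddAbove_setOf_pos_le_one_of_le_mul_rpow hC.le hα hr₀ (by positivity) (hΦ x)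
  have hsup : 0 < sSup (auxSet n V x) := hne.some_mem.1.trans_le (le_csSup hbdd hne.some_mem)
  exact ⟨hne, hbdd, hsup, inv_pos.2 hsup⟩

end
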